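/- Let (V, L, ∂) be a crossed module over a Lie algebra with M = ker ∂ and g = coker ∂, and let s, q be linear sections of π and ∂ respectively. Then the map θ : ∧³g → M defined by θ(x,y,z) = [s(x), g(y,z)] - [s(y), g(x,z)] + [s(z), g(x,y)] - g([x,y], z) + g([x,z], y) - g([y,z], x), with g(x,y) = q([s(x), s(y)] - s[x,y]), is a 3-cocycle in the Chevalley-Eilenberg complex of g with coefficients in M: δθ = 0. -/

import Mathlib

/-!
Write `κ(x, y) = [s x, s y] - s [x, y] ∈ L` for the curvature of the section `s`, so that
`gAux = q ∘ κ` and `θ = δₛ gAux`, where `δₛ` is the Chevalley–Eilenberg formula with `g` acting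
through `s`. Since `s` is not a Lie morphism, `δₛ ∘ δₛ` is not zero: for any alternating
`2`-cochain `c`, the Jacobi identities in `g` and in the `L`-module `V` leave exactly
`(δₛ δₛ c)(x₁, …, x₄) = Σ ± [κ(xᵢ, xⱼ), c(xₖ, xₗ)]` over the shuffles `(ij|kl)`.
For `c = gAux` we have `κ = ∂ ∘ gAux`, because `κ` lies in `ker π = im ∂` and `q` is a section of
`∂` there; the six terms then cancel in pairs by the Peiffer identity
`[∂v, w] + [∂w, v] = 0`.
-/

variable {K L V g : Type} [Field K] [LieRing L] [LieAlgebra K L]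
  [AddCommGroup V] [Module K V] [LieRingModule L V] [LieModule K L V]
  [LieRing g] [LieAlgebra K g]

/-- `g(x,y) = q([s(x), s(y)] - s[x,y])`. -/
def gAux (s : g →ₗ[K] L) (q : L →ₗ[K] V) (x y : g) : V :=
  q (⁅s x, s y⁆ - s ⁅x, y⁆)

/-- The `3`-cochain `θ` associated to a crossed module with chosen sections `s`, `q`. -/
def theta (s : g →ₗ[K] L) (q : L →ₗ[K] V) (x y z : g) : V :=
  ⁅s x, gAux s q y z⁆ - ⁅s y, gAux s q x z⁆ + ⁅s z, gAux s q x y⁆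
    - gAux s q ⁅x, y⁆ z + gAux s q ⁅x, z⁆ y - gAux s q ⁅y, z⁆ x

def curvature (s : g →+ L) (x y : g) : L :=
  ⁅s x, s y⁆ - s ⁅x, y⁆

def ceDiff2 (s : g →+ L) (c : g → g → V) (x y z : g) : V :=
  ⁅s x, c y z⁆ - ⁅s y, c x z⁆ + ⁅s z, c x y⁆ - c ⁅x, y⁆ z + c ⁅x, z⁆ y - c ⁅y, z⁆ x

def ceDiff3 (s : g →+ L) (t : g → g → g → V) (x₁ x₂ x₃ x₄ : g) : V :=
  ⁅s x₁, t x₂ x₃ x₄⁆ - ⁅s x₂, t x₁ x₃ x₄⁆ + ⁅s x₃, t x₁ x₂ x₄⁆ - ⁅s x₄, t x₁ x₂ x₃⁆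
    - t ⁅x₁, x₂⁆ x₃ x₄ + t ⁅x₁, x₃⁆ x₂ x₄ - t ⁅x₁, x₄⁆ x₂ x₃ - t ⁅x₂, x₃⁆ x₁ x₄
    + t ⁅x₂, x₄⁆ x₁ x₃ - t ⁅x₃, x₄⁆ x₁ x₂

theorem curvature_sub_left (s : g →+ L) (u v w : g) :
    curvature s (u - v) w = curvature s u w - curvature s v w := by
  simp only [curvature, map_sub, sub_lie]
  abel

theorem curvature_skew (s : g →+ L) (u v : g) : curvature s u v = -curvature s v u := by
  simp only [curvature, ← lie_skew u v, ← lie_skew (s u) (s v), map_neg]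
  abel

theorem lie_lie_rotate (a b c : g) : ⁅⁅b, c⁆, a⁆ = ⁅⁅a, c⁆, b⁆ - ⁅⁅a, b⁆, c⁆ := by
  rw [← lie_skew ⁅b, c⁆ a, leibniz_lie, ← lie_skew b ⁅a, c⁆]
  abel

theorem ceDiff3_ceDiff2 (s : g →+ L) (c : g → g → V)
    (hc_sub : ∀ u v w, c (u - v) w = c u w - c v w) (hc_skew : ∀ u v, c u v = -c v u)
    (x₁ x₂ x₃ x₄ : g) :
    ceDiff3 s (ceDiff2 s c) x₁ x₂ x₃ x₄ =
      ⁅curvature s x₁ x₂, c x₃ x₄⁆ - ⁅curvature s x₁ x₃, c x₂ x₄⁆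
        + ⁅curvature s x₁ x₄, c x₂ x₃⁆ + ⁅curvature s x₂ x₃, c x₁ x₄⁆
        - ⁅curvature s x₂ x₄, c x₁ x₃⁆ + ⁅curvature s x₃ x₄, c x₁ x₂⁆ := by
  have jacobi : ∀ a b d w : g, c ⁅⁅b, d⁆, a⁆ w = c ⁅⁅a, d⁆, b⁆ w - c ⁅⁅a, b⁆, d⁆ w :=
    fun a b d w ↦ by rw [lie_lie_rotate, hc_sub]
  simp only [ceDiff3, ceDiff2, curvature]
  rw [jacobi x₁ x₂ x₃ x₄, jacobi x₁ x₂ x₄ x₃, jacobi x₁ x₃ x₄ x₂, jacobi x₂ x₃ x₄ x₁,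
    hc_skew ⁅x₃, x₄⁆ ⁅x₁, x₂⁆, hc_skew ⁅x₂, x₄⁆ ⁅x₁, x₃⁆, hc_skew ⁅x₂, x₃⁆ ⁅x₁, x₄⁆]
  simp only [sub_lie, lie_sub, lie_add, lie_lie]
  abel

section Sections

variable {W : Type} [AddCommGroup W] [Module K W] (s : g →ₗ[K] L) (q : L →ₗ[K] W)

theorem gAux_eq_curvature (x y : g) : gAux s q x y = q (curvature s.toAddMonoidHom x y) :=
  rfl

theorem theta_eq_ceDiff2 [LieRingModule L W] :
    theta s q = ceDiff2 s.toAddMonoidHom (gAux s q) :=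
  rfl

theorem gAux_sub_left (u v w : g) : gAux s q (u - v) w = gAux s q u w - gAux s q v w := by
  simp only [gAux_eq_curvature, curvature_sub_left, map_sub]

theorem gAux_skew (u v : g) : gAux s q u v = -gAux s q v u := by
  rw [gAux_eq_curvature, curvature_skew, map_neg, gAux_eq_curvature]

theorem map_gAux_eq_curvature (d : W →ₗ[K] L) (π : L →ₗ⁅K⁆ g)
    (hker : ∀ z : L, π z = 0 → z ∈ LinearMap.range d) (hs : ∀ x : g, π (s x) = x)
    (hq : ∀ z ∈ LinearMap.range d, d (q z) = z) (x y : g) :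
    d (gAux s q x y) = curvature s.toAddMonoidHom x y :=
  hq _ <| hker _ <| by simp [hs]

end Sections

/-- The `g`-action on `M = ker ∂` is computed through the lift `s`; the induced action does not
depend on the lift. -/
theorem crossed_ext_stmt7_general
    (d : V →ₗ[K] L)
    (hcross : ∀ v w : V, ⁅d v, w⁆ = - ⁅d w, v⁆)
    (π : L →ₗ⁅K⁆ g)
    (hker : ∀ z : L, π z = 0 ↔ z ∈ LinearMap.range d)
    (s : g →ₗ[K] L) (hs : ∀ x : g, π (s x) = x)
    (q : L →ₗ[K] V) (hq : ∀ z ∈ LinearMap.range d, d (q z) = z) :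
    ∀ x₁ x₂ x₃ x₄ : g,
      ⁅s x₁, theta s q x₂ x₃ x₄⁆ - ⁅s x₂, theta s q x₁ x₃ x₄⁆
        + ⁅s x₃, theta s q x₁ x₂ x₄⁆ - ⁅s x₄, theta s q x₁ x₂ x₃⁆
        - theta s q ⁅x₁, x₂⁆ x₃ x₄ + theta s q ⁅x₁, x₃⁆ x₂ x₄
        - theta s q ⁅x₁, x₄⁆ x₂ x₃ - theta s q ⁅x₂, x₃⁆ x₁ x₄
        + theta s q ⁅x₂, x₄⁆ x₁ x₃ - theta s q ⁅x₃, x₄⁆ x₁ x₂ = 0 := by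
  intro x₁ x₂ x₃ x₄
  have hκ (x y : g) : curvature s.toAddMonoidHom x y = d (gAux s q x y) :=
    (map_gAux_eq_curvature s q d π (fun z ↦ (hker z).1) hs hq x y).symm
  change ceDiff3 s.toAddMonoidHom (theta s q) x₁ x₂ x₃ x₄ = 0
  rw [theta_eq_ceDiff2, ceDiff3_ceDiff2 _ _ (gAux_sub_left s q) (gAux_skew s q)]
  simp only [hκ]
  rw [hcross (gAux s q x₃ x₄), hcross (gAux s q x₂ x₄), hcross (gAux s q x₂ x₃)]
  abel

/-- the alternating cochain `θ : ∧³g → M` is a `3`-cocycle in the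
Chevalley-Eilenberg complex of `g` with coefficients in `M = ker ∂` (where the `g`-action
on `M` is computed via the lift `s`, which is legitimate since the induced action is
independent of the choice of lift). -/
theorem crossed_ext_stmt7
    (d : V →ₗ[K] L)
    (hmod : ∀ (x : L) (v : V), d ⁅x, v⁆ = ⁅x, d v⁆)
    (hcross : ∀ v w : V, ⁅d v, w⁆ = - ⁅d w, v⁆)
    (π : L →ₗ⁅K⁆ g) (hπ : Function.Surjective π)
    (hker : ∀ z : L, π z = 0 ↔ z ∈ LinearMap.range d)
    (s : g →ₗ[K] L) (hs : ∀ x : g, π (s x) = x)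
    (q : L →ₗ[K] V) (hq : ∀ z ∈ LinearMap.range d, d (q z) = z) :
    ∀ x₁ x₂ x₃ x₄ : g,
      ⁅s x₁, theta s q x₂ x₃ x₄⁆ - ⁅s x₂, theta s q x₁ x₃ x₄⁆
        + ⁅s x₃, theta s q x₁ x₂ x₄⁆ - ⁅s x₄, theta s q x₁ x₂ x₃⁆
        - theta s q ⁅x₁, x₂⁆ x₃ x₄ + theta s q ⁅x₁, x₃⁆ x₂ x₄
        - theta s q ⁅x₁, x₄⁆ x₂ x₃ - theta s q ⁅x₂, x₃⁆ x₁ x₄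
        + theta s q ⁅x₂, x₄⁆ x₁ x₃ - theta s q ⁅x₃, x₄⁆ x₁ x₂ = 0 :=
  crossed_ext_stmt7_general d hcross π hker s hs q hq
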